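/- For G = S_p acting on ℤ_(p)[x_1,…,x_p] by permuting variables, the image of the transfer map equals the ideal ⟨p, e_1, e_2, …, e_{p−1}⟩ of ℤ_(p)[e_1,…,e_p]. -/

import Mathlib

/-!
The transfer `Tr f = ∑_σ σ f` is linear over the invariant ring, so its image is an ideal. It
contains `p = Tr (1 / (p-1)!)` and, because `Tr (x_1 ⋯ x_j) = j! (p-j)! e_j` with `j! (p-j)!` a
unit of `ℤ_(p)` for `0 < j < p`, every `e_j` with `j < p`. Conversely, reduce coefficients mod `p`
and send every variable to one variable `x`. This kills `Tr f`, which becomes `p!` times the image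
of `f`, and sends `e_j` to `(p choose j) x^j`, that is to `0` for `j < p` and to `x^p` for `j = p`.
So if `Tr f = Q(e_1, …, e_p)`, then `Q(0, …, 0, x^p) ≡ 0 mod p`: every monomial of `Q` either
involves some `e_j` with `j < p` or has a coefficient divisible by `p`.
-/

open MvPolynomial

/-- The prime ideal `(p)` of `ℤ`. -/
abbrev pIdeal (p : ℕ) : Ideal ℤ := Ideal.span {(p : ℤ)}

instance pIdeal_isPrime (p : ℕ) [hp : Fact p.Prime] : (pIdeal p).IsPrime :=
  (Ideal.span_singleton_prime (by exact_mod_cast hp.out.ne_zero)).mpr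
    (Nat.prime_iff_prime_int.mp hp.out)

/-- `ℤ_(p)`, the localization of `ℤ` at the prime `p`. -/
abbrev Zp (p : ℕ) [Fact p.Prime] : Type := Localization.AtPrime (pIdeal p)

/-- The `j`-th elementary symmetric polynomial in `n` variables over `ℤ_(p)`, as an element
of the invariant ring `ℤ_(p)[e_1,…,e_n]` (the subalgebra of symmetric polynomials). -/
noncomputable def eA (p : ℕ) [Fact p.Prime] (n : ℕ) (j : ℕ) :
    (symmetricSubalgebra (Fin n) (Zp p)) :=
  ⟨esymm (Fin n) (Zp p) j,
    (mem_symmetricSubalgebra _).mpr (esymm_isSymmetric (Fin n) (Zp p) j)⟩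

namespace MvPolynomial

open Equiv Finset
open scoped Pointwise

section Transfer

variable (σ R : Type*) [CommSemiring R] [Fintype σ] [DecidableEq σ]

noncomputable def transfer :
    MvPolynomial σ R →ₗ[symmetricSubalgebra σ R] symmetricSubalgebra σ R where
  toFun f := ⟨∑ g : Perm σ, rename g f, fun τ => by
    simp_rw [map_sum, rename_rename]
    exact Fintype.sum_equiv (Equiv.mulLeft τ) _ _ fun _ => rfl⟩
  map_add' f f' := Subtype.ext <| by simp [sum_add_distrib]
  map_smul' s f := Subtype.ext <| by
    simp [Subalgebra.smul_def, mul_sum, (mem_symmetricSubalgebra _).mp s.2 _]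

variable {σ R}

theorem coe_transfer_apply (f : MvPolynomial σ R) :
    (transfer σ R f : MvPolynomial σ R) = ∑ g : Perm σ, rename g f := rfl

theorem coe_transfer_C (r : R) :
    (transfer σ R (C r) : MvPolynomial σ R) = (Fintype.card σ).factorial • C r := by
  simp [coe_transfer_apply, Fintype.card_perm]

theorem card_filter_smul_eq_of_card_eq {s t : Finset σ} (h : #t = #s) :
    #{g : Perm σ | g • s = t} = #{g : Perm σ | g • s = s} := by
  obtain ⟨τ, hτ⟩ : ∃ τ : Perm σ, τ • s = t := by
    have := Set.powersetCard.isPretransitive (α := σ) (n := #s)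
    obtain ⟨τ, hτ⟩ := MulAction.exists_smul_eq (Perm σ)
      (⟨s, rfl⟩ : Set.powersetCard σ #s) ⟨t, h⟩
    exact ⟨τ, congrArg Subtype.val hτ⟩
  refine card_bij' (fun g _ => τ⁻¹ * g) (fun g _ => τ * g) ?_ ?_ ?_ ?_ <;>
    simp_all [mul_smul, inv_smul_eq_iff]

theorem sum_perm_smul_finset {M : Type*} [AddCommMonoid M] (F : Finset σ → M) (s : Finset σ) :
    ∑ g : Perm σ, F (g • s) = #{g : Perm σ | g • s = s} • ∑ t ∈ powersetCard #s univ, F t := by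
  rw [← sum_fiberwise_of_maps_to (g := fun g : Perm σ => g • s) (t := powersetCard #s univ)
    (fun g _ => mem_powersetCard.mpr ⟨subset_univ _, card_smul_finset g s⟩), smul_sum]
  refine sum_congr rfl fun t ht => ?_
  rw [sum_congr rfl fun g hg => congrArg F (mem_filter.mp hg).2, sum_const,
    card_filter_smul_eq_of_card_eq (mem_powersetCard.mp ht).2]

theorem card_filter_smul_eq_self_mul_choose (s : Finset σ) :
    #{g : Perm σ | g • s = s} * (Fintype.card σ).choose #s = (Fintype.card σ).factorial := by
  have h := sum_perm_smul_finset (fun _ => (1 : ℕ)) s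
  simp only [sum_const, card_powersetCard, card_univ, Fintype.card_perm, smul_eq_mul,
    mul_one] at h
  exact h.symm

theorem card_filter_smul_eq_self (s : Finset σ) :
    #{g : Perm σ | g • s = s} = (#s).factorial * (Fintype.card σ - #s).factorial := by
  have hs : #s ≤ Fintype.card σ := card_le_univ s
  apply Nat.eq_of_mul_eq_mul_right (Nat.choose_pos hs)
  rw [card_filter_smul_eq_self_mul_choose, ← Nat.choose_mul_factorial_mul_factorial hs]
  ring

theorem coe_transfer_prod_X (s : Finset σ) :
    (transfer σ R (∏ i ∈ s, X i) : MvPolynomial σ R) =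
      #{g : Perm σ | g • s = s} • esymm σ R #s := by
  have h (g : Perm σ) : rename g (∏ i ∈ s, X i : MvPolynomial σ R) = ∏ i ∈ g • s, X i := by
    simp [smul_finset_def, prod_image fun a _ b _ hab => g.injective hab]
  simp_rw [coe_transfer_apply, h]
  rw [sum_perm_smul_finset (fun t => ∏ i ∈ t, (X i : MvPolynomial σ R)), esymm]

theorem exists_transfer_eq_natCast [Nonempty σ]
    (h : IsUnit ((Fintype.card σ - 1).factorial : R)) :
    ∃ f, (transfer σ R f : MvPolynomial σ R) = Fintype.card σ := by
  obtain ⟨u, hu⟩ := h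
  refine ⟨C ↑u⁻¹, ?_⟩
  rw [coe_transfer_C, ← Nat.mul_factorial_pred Fintype.card_ne_zero, nsmul_eq_mul,
    ← map_natCast C, ← map_mul, Nat.cast_mul, ← hu, mul_assoc, Units.mul_inv, mul_one, map_natCast]

theorem exists_transfer_eq_esymm {j : ℕ} (hj : j ≤ Fintype.card σ)
    (h : IsUnit ((j.factorial * (Fintype.card σ - j).factorial : ℕ) : R)) :
    ∃ f, (transfer σ R f : MvPolynomial σ R) = esymm σ R j := by
  obtain ⟨s, -, rfl⟩ := exists_subset_card_eq (show j ≤ #(univ : Finset σ) by rwa [card_univ])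
  obtain ⟨u, hu⟩ := h
  refine ⟨(↑u⁻¹ : R) • ∏ i ∈ s, X i, ?_⟩
  rw [LinearMap.map_smul_of_tower, SetLike.val_smul, coe_transfer_prod_X, card_filter_smul_eq_self,
    ← Nat.cast_smul_eq_nsmul R, smul_smul, ← hu, Units.inv_mul, one_smul]

end Transfer

section Reduction

variable {σ R K : Type*} [CommSemiring R] [CommSemiring K]

noncomputable def diagonalReduction (φ : R →+* K) : MvPolynomial σ R →+* MvPolynomial Unit K :=
  (rename fun _ : σ => ()).toRingHom.comp (map φ)

theorem diagonalReduction_apply (φ : R →+* K) (f : MvPolynomial σ R) :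
    diagonalReduction φ f = rename (fun _ => ()) (map φ f) := rfl

theorem diagonalReduction_rename (φ : R →+* K) (g : σ → σ) (f : MvPolynomial σ R) :
    diagonalReduction φ (rename g f) = diagonalReduction φ f := by
  simp only [diagonalReduction_apply, map_rename, rename_rename]

theorem diagonalReduction_transfer_eq_zero [Fintype σ] [DecidableEq σ] {φ : R →+* K}
    (hK : ((Fintype.card σ).factorial : K) = 0) (f : MvPolynomial σ R) :
    diagonalReduction φ (transfer σ R f : MvPolynomial σ R) = 0 := by
  simp [coe_transfer_apply, diagonalReduction_rename, Fintype.card_perm,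
    ← Nat.cast_smul_eq_nsmul K, hK]

theorem diagonalReduction_esymm [Fintype σ] (φ : R →+* K) (j : ℕ) :
    diagonalReduction φ (esymm σ R j) = (Fintype.card σ).choose j • X () ^ j := by
  rw [diagonalReduction_apply, map_esymm, esymm, map_sum]
  simp only [map_prod, rename_X, prod_const]
  rw [sum_congr rfl fun t ht => by rw [(mem_powersetCard.mp ht).2], sum_const,
    card_powersetCard, card_univ]

/-- `killCompl` sets every variable but `ℓ` to zero, and `expand n` substitutes `x ↦ x ^ n`; so the
right-hand side is the reduction of `Q(0, …, 0, x ^ n)`. -/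
theorem diagonalReduction_esymmAlgHom {n : ℕ} (φ : R →+* K) {ℓ : Fin n} (hℓ : (ℓ : ℕ) + 1 = n)
    (hK : ∀ j, 0 < j → j < n → (n.choose j : K) = 0) (Q : MvPolynomial (Fin n) R) :
    diagonalReduction φ (esymmAlgHom (Fin n) R n Q : MvPolynomial (Fin n) R) =
      expand n (killCompl (Function.injective_of_subsingleton fun _ : Unit => ℓ) (map φ Q)) := by
  suffices (diagonalReduction φ).comp
      ((symmetricSubalgebra (Fin n) R).val.toRingHom.comp (esymmAlgHom (Fin n) R n).toRingHom) =
      (expand n).toRingHom.comp ((killCompl _).toRingHom.comp (map φ)) from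
    RingHom.congr_fun this Q
  refine ringHom_ext (fun r => by simp [diagonalReduction_apply]) (fun i => ?_)
  have hX : diagonalReduction φ (esymm (Fin n) R (i + 1)) =
      expand n (killCompl (Function.injective_of_subsingleton fun _ : Unit => ℓ) (X i)) := by
    rw [diagonalReduction_esymm, Fintype.card_fin, ← Nat.cast_smul_eq_nsmul K, killCompl, aeval_X]
    simp only [Set.range_const, Set.mem_singleton_iff]
    split_ifs with h
    · subst h
      simp [hℓ]
    · have hi : (i : ℕ) + 1 < n := by
        have := Fin.val_ne_of_ne h
        omega
      rw [hK _ (Nat.succ_pos _) hi, zero_smul, map_zero]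
  simpa [esymmAlgHom] using hX

end Reduction

section Ideal

variable {σ R : Type*}

theorem mem_span_X_image_ne_of_killCompl_eq_zero [CommSemiring R] {ℓ : σ}
    {Q : MvPolynomial σ R}
    (hQ : killCompl (Function.injective_of_subsingleton fun _ : Unit => ℓ) Q = 0) :
    Q ∈ Ideal.span (X '' {i | i ≠ ℓ}) := by
  rw [mem_ideal_span_X_image]
  intro m hm
  by_contra! hm_single
  have : m = (Finsupp.single () (m ℓ)).mapDomain fun _ => ℓ := by
    rw [Finsupp.mapDomain_single, Finsupp.eq_single_iff]
    refine ⟨fun i hi => ?_, rfl⟩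
    by_contra hiℓ
    exact Finsupp.mem_support_iff.mp hi (hm_single i (by simpa using hiℓ))
  rw [mem_support_iff, this, ← coeff_killCompl (Function.injective_of_subsingleton _), hQ,
    coeff_zero] at hm
  exact hm rfl

theorem mem_span_C_union_of_map_mk_mem [CommRing R] {r : R} {s : Set σ} {Q : MvPolynomial σ R}
    (hQ : map (Ideal.Quotient.mk (Ideal.span {r})) Q ∈ Ideal.span (X '' s)) :
    Q ∈ Ideal.span ({C r} ∪ X '' s) := by
  have hsurj := map_surjective (σ := σ) _ (Ideal.Quotient.mk_surjective (I := Ideal.span {r}))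
  have hspan : Ideal.span (X '' s) =
      Ideal.map (map (Ideal.Quotient.mk (Ideal.span {r}))) (Ideal.span (X '' s)) := by
    simp [Ideal.map_span, Set.image_image]
  rw [hspan, ← Ideal.mem_comap, Ideal.comap_map_of_surjective _ hsurj, ← RingHom.ker_eq_comap_bot,
    ker_map, Ideal.mk_ker, Ideal.map_span, Set.image_singleton] at hQ
  rwa [Ideal.span_union, sup_comm]

end Ideal

end MvPolynomial

theorem Ideal.Quotient.natCast_eq_zero_of_dvd {A : Type*} [CommRing A] {m n : ℕ} (h : m ∣ n) :
    (n : A ⧸ Ideal.span {(m : A)}) = 0 := by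
  rw [← map_natCast (Ideal.Quotient.mk _), Ideal.Quotient.eq_zero_iff_dvd]
  exact Nat.cast_dvd_cast h

section LocalizationAtPrime

variable (p : ℕ) [hp : Fact p.Prime]

theorem isUnit_natCast_Zp {n : ℕ} (h : ¬ p ∣ n) : IsUnit (n : Zp p) := by
  have hmem : (n : ℤ) ∈ (pIdeal p).primeCompl := by
    simpa [Ideal.primeCompl, Ideal.mem_span_singleton, Int.natCast_dvd_natCast] using h
  simpa using (IsLocalization.AtPrime.isUnit_to_map_iff (Zp p) (pIdeal p) (n : ℤ)).mpr hmem

theorem isUnit_factorial_Zp {n : ℕ} (hn : n < p) : IsUnit (n.factorial : Zp p) :=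
  isUnit_natCast_Zp p fun h => by
    rw [hp.out.dvd_factorial] at h
    omega

theorem map_esymmAlgHom_span_le {ℓ : Fin p} (hℓ : (ℓ : ℕ) + 1 = p) :
    Ideal.map (esymmAlgHom (Fin p) (Zp p) p) (Ideal.span ({C (p : Zp p)} ∪ X '' {i | i ≠ ℓ})) ≤
      Ideal.span (({(p : symmetricSubalgebra (Fin p) (Zp p))} : Set _) ∪
        (fun j => eA p p j) '' Set.Icc 1 (p - 1)) := by
  rw [Ideal.map_le_iff_le_comap, Ideal.span_le]
  rintro _ (rfl | ⟨i, hi, rfl⟩)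
  · exact Ideal.subset_span (Or.inl (by simp))
  · have hi' : (i : ℕ) + 1 ≤ p - 1 := by
      have := Fin.val_ne_of_ne hi
      omega
    refine Ideal.subset_span (Or.inr ⟨i + 1, ⟨i.succ_pos, hi'⟩, Subtype.ext ?_⟩)
    simp [eA, esymmAlgHom_apply]

theorem transfer_mem_span (f : MvPolynomial (Fin p) (Zp p)) :
    transfer (Fin p) (Zp p) f ∈ Ideal.span
      (({(p : symmetricSubalgebra (Fin p) (Zp p))} : Set _) ∪
        (fun j => eA p p j) '' Set.Icc 1 (p - 1)) := by
  have hp0 := hp.out.pos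
  set ℓ : Fin p := ⟨p - 1, by omega⟩
  have hℓ : (ℓ : ℕ) + 1 = p := Nat.sub_add_cancel hp0
  have hK (j : ℕ) (hj : 0 < j) (hjp : j < p) :
      (p.choose j : Zp p ⧸ Ideal.span {(p : Zp p)}) = 0 :=
    Ideal.Quotient.natCast_eq_zero_of_dvd (hp.out.dvd_choose_self hj.ne' hjp)
  obtain ⟨Q, hQ⟩ := (esymmAlgHom_fin_bijective (Zp p) p).2 (transfer (Fin p) (Zp p) f)
  have hkill : killCompl (Function.injective_of_subsingleton fun _ : Unit => ℓ)
      (map (Ideal.Quotient.mk (Ideal.span {(p : Zp p)})) Q) = 0 := by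
    apply expand_injective hp0
    rw [map_zero, ← diagonalReduction_esymmAlgHom _ hℓ hK, hQ]
    refine diagonalReduction_transfer_eq_zero ?_ f
    rw [Fintype.card_fin]
    exact Ideal.Quotient.natCast_eq_zero_of_dvd (Nat.dvd_factorial hp0 le_rfl)
  rw [← hQ]
  exact map_esymmAlgHom_span_le p hℓ <| Ideal.mem_map_of_mem _ <|
    mem_span_C_union_of_map_mk_mem (mem_span_X_image_ne_of_killCompl_eq_zero hkill)

theorem range_transfer :
    LinearMap.range (transfer (Fin p) (Zp p)) = Ideal.span
      (({(p : symmetricSubalgebra (Fin p) (Zp p))} : Set _) ∪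
        (fun j => eA p p j) '' Set.Icc 1 (p - 1)) := by
  have hp0 := hp.out.pos
  refine le_antisymm (LinearMap.range_le_iff_comap.mpr ?_) (Submodule.span_le.mpr ?_)
  · exact eq_top_iff.mpr fun f _ => transfer_mem_span p f
  rintro _ (rfl | ⟨j, ⟨hj1, hjp⟩, rfl⟩)
  · have : Nonempty (Fin p) := ⟨⟨0, hp0⟩⟩
    obtain ⟨f, hf⟩ := exists_transfer_eq_natCast (σ := Fin p)
      (by simpa using isUnit_factorial_Zp p (Nat.sub_lt hp0 one_pos))
    exact ⟨f, Subtype.ext (by simpa using hf)⟩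
  · have hunit : IsUnit ((j.factorial * (Fintype.card (Fin p) - j).factorial : ℕ) : Zp p) := by
      rw [Nat.cast_mul, Fintype.card_fin]
      exact (isUnit_factorial_Zp p (by omega)).mul (isUnit_factorial_Zp p (by omega))
    obtain ⟨f, hf⟩ := exists_transfer_eq_esymm (by rw [Fintype.card_fin]; omega) hunit
    exact ⟨f, Subtype.ext hf⟩

end LocalizationAtPrime

/-- For `G = S_p` acting on `ℤ_(p)[x_1,…,x_p]` by permuting variables, the
image of the transfer map equals the ideal `⟨p, e_1, …, e_{p−1}⟩` of the invariant ring
`ℤ_(p)[e_1,…,e_p]`. -/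
theorem image_transfer_eq_ideal_n_eq_p (p : ℕ) [Fact p.Prime] :
    {x : MvPolynomial (Fin p) (Zp p) |
        ∃ f, ∑ σ : Equiv.Perm (Fin p), rename (⇑σ) f = x} =
      Subtype.val ''
        (↑(Ideal.span
            (({((p : ℕ) : symmetricSubalgebra (Fin p) (Zp p))} : Set _) ∪
             ((fun j => eA p p j) '' Set.Icc 1 (p - 1)))) :
          Set (symmetricSubalgebra (Fin p) (Zp p))) := by
  rw [← range_transfer]
  ext x
  constructor
  · rintro ⟨f, rfl⟩
    exact ⟨_, LinearMap.mem_range_self _ f, rfl⟩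
  · rintro ⟨_, ⟨f, rfl⟩, rfl⟩
    exact ⟨f, rfl⟩
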